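/- Consider the closed-loop cable dynamics on [0,L]: functions V, W : [0,∞) × [0,L] → ℝ jointly continuous, with ∂V/∂t, ∂W/∂t, ∂V/∂s, ∂²V/∂s² existing and jointly continuous, satisfying for all t ≥ 0 and s ∈ [0,L]: τ·∂V/∂t = λ²·∂²V/∂s² − V − W + I and τ̃·∂W/∂t = −W + b·g(V), where the control current is I(t,s) = b·g(V(t,s)) + (1−β)·V(t,s) + β·V̄(s) − λ²·V̄''(s) for a twice continuously differentiable reference voltage V̄ : [0,L] → ℝ with V̄'(0) = V̄'(L) = 0, and with Neumann boundary conditions ∂V/∂s(t,0) = ∂V/∂s(t,L) = 0 for all t ≥ 0. Define the Lyapunov functional 𝓛₀(t) = (1/2)·∫₀ᴸ [ τ·(V(t,s) − V̄(s))² + τ̃·(W(t,s) − b·g(V̄(s)))² ] ds and set k = 1/τ̃. If b ≥ 0, τ > 0, τ̃ > 0, λ > 0 and β > (b+1)²/2 + b + k·τ/2, then 𝓛₀(t) ≤ 𝓛₀(0)·exp(−k·t) for all t ≥ 0; in particular the equilibrium (V̄, b·g(V̄)) of the closed-loop neural dynamics is exponentially stable. -/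

import Mathlib

/-!
Along the closed loop, the errors `a = V - V̄` and `c = W - b g(V̄)` obey
`τ ∂ₜa = λ² ∂ₛ²a - β a - c + b d` and `τ̃ ∂ₜc = -c + b d` with `d = g(V) - g(V̄)`, `|d| ≤ |a|`.
Hence `d/dt ∫ (τ a² + τ̃ c²) = 2λ² ∫ a ∂ₛ²a + ∫ Q`, where the Neumann conditions turn the first
integral into `-∫ (∂ₛa)² ≤ 0` and, by AM–GM and the choice of `β`, the quadratic form `Q`
is at most `-k (τ a² + τ̃ c²)`. Multiplying by `exp (k t)` gives a nonincreasing quantity.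
-/

open Set Filter Topology MeasureTheory intervalIntegral

open scoped Interval

section ParametricIntegral

variable {X E : Type*} [TopologicalSpace X] [FirstCountableTopology X]
  [NormedAddCommGroup E] [NormedSpace ℝ E] {a b : ℝ}

theorem continuousOn_intervalIntegral_of_continuousOn_prod {F : X → ℝ → E} {s : Set X}
    (hF : ContinuousOn F.uncurry (s ×ˢ [[a, b]])) :
    ContinuousOn (fun x => ∫ t in a..b, F x t) s := by
  intro q hq
  have hunif : TendstoUniformlyOn F (F q) (𝓝[s] q) [[a, b]] := fun u hu => by
    obtain ⟨v, hv, hvu⟩ := isCompact_uIcc.mem_uniformity_of_prod hF hq (symm_le_uniformity hu)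
    exact mem_of_superset hv fun p hp x hx => hvu p hp x hx
  refine hunif.tendsto_intervalIntegral_of_continuousOn ?_
  filter_upwards [self_mem_nhdsWithin] with p hp using hF.uncurry_left p hp

theorem hasDerivAt_intervalIntegral_of_continuousOn_prod {F F' : ℝ → ℝ → E} {U : Set ℝ}
    (hU : IsOpen U) (hF : ContinuousOn F.uncurry (U ×ˢ [[a, b]]))
    (hF' : ContinuousOn F'.uncurry (U ×ˢ [[a, b]]))
    (hderiv : ∀ x ∈ U, ∀ t ∈ [[a, b]], HasDerivAt (F · t) (F' x t) x)
    {x₀ : ℝ} (hx₀ : x₀ ∈ U) :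
    HasDerivAt (fun x => ∫ t in a..b, F x t) (∫ t in a..b, F' x₀ t) x₀ := by
  obtain ⟨δ, hδ, hδU⟩ := Metric.nhds_basis_closedBall.mem_iff.1 (hU.mem_nhds hx₀)
  obtain ⟨C, hC⟩ := ((isCompact_closedBall x₀ δ).prod isCompact_uIcc).exists_bound_of_continuousOn
    (hF'.mono (prod_mono_left hδU))
  have hmeas : ∀ {G : ℝ → ℝ → E}, ContinuousOn G.uncurry (U ×ˢ [[a, b]]) → ∀ x ∈ U,
      AEStronglyMeasurable (G x) (volume.restrict (Ι a b)) := fun hG x hx =>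
    ((hG.uncurry_left x hx).mono uIoc_subset_uIcc).aestronglyMeasurable measurableSet_uIoc
  refine (hasDerivAt_integral_of_dominated_loc_of_deriv_le (bound := fun _ => C)
    (Metric.closedBall_mem_nhds x₀ hδ) ?_ ((hF.uncurry_left x₀ hx₀).intervalIntegrable)
    (hmeas hF' x₀ hx₀) ?_ intervalIntegrable_const ?_).2
  · filter_upwards [hU.mem_nhds hx₀] with x hx using hmeas hF x hx
  · exact ae_of_all _ fun t ht x hx => hC (x, t) ⟨hx, uIoc_subset_uIcc ht⟩
  · exact ae_of_all _ fun t ht x hx => hderiv x (hδU hx) t (uIoc_subset_uIcc ht)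

end ParametricIntegral

theorem le_mul_exp_of_hasDerivAt_add_mul_nonpos {f f' : ℝ → ℝ} {k a : ℝ}
    (hf : ContinuousOn f (Ici a)) (hf' : ∀ t ∈ Ioi a, HasDerivAt f (f' t) t)
    (hle : ∀ t ∈ Ioi a, f' t + k * f t ≤ 0) {t : ℝ} (ht : a ≤ t) :
    f t ≤ f a * Real.exp (-k * (t - a)) := by
  have hexp (x : ℝ) : HasDerivAt (fun t => Real.exp (k * t)) (Real.exp (k * x) * k) x := by
    simpa using ((hasDerivAt_id x).const_mul k).exp
  have hanti : AntitoneOn (fun t => f t * Real.exp (k * t)) (Ici a) := by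
    refine antitoneOn_of_hasDerivWithinAt_nonpos (convex_Ici a) (hf.mul (by fun_prop))
      (f' := fun x => f' x * Real.exp (k * x) + f x * (Real.exp (k * x) * k))
      (fun x hx => ?_) (fun x hx => ?_)
    · rw [interior_Ici] at hx ⊢
      exact ((hf' x hx).mul (hexp x)).hasDerivWithinAt
    · rw [interior_Ici] at hx
      have := mul_nonpos_of_nonpos_of_nonneg (hle x hx) (Real.exp_pos (k * x)).le
      linarith
  have key := hanti self_mem_Ici ht ht
  calc f t = f t * Real.exp (k * t) * Real.exp (-(k * t)) := by
        rw [mul_assoc, ← Real.exp_add, add_neg_cancel, Real.exp_zero, mul_one]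
    _ ≤ f a * Real.exp (k * a) * Real.exp (-(k * t)) := by gcongr
    _ = f a * Real.exp (-k * (t - a)) := by
        rw [mul_assoc, ← Real.exp_add]; ring_nf

theorem intervalIntegral_le_mul_exp_of_dissipation {e e' : ℝ → ℝ → ℝ} {a b k : ℝ}
    (hab : a ≤ b)    (he : ContinuousOn e.uncurry (Ici 0 ×ˢ Icc a b))
    (he' : ContinuousOn e'.uncurry (Ici 0 ×ˢ Icc a b))
    (hderiv : ∀ t ∈ Ioi (0:ℝ), ∀ x ∈ Icc a b, HasDerivAt (e · x) (e' t x) t)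
    (hdiss : ∀ t ∈ Ioi (0:ℝ), (∫ x in a..b, e' t x) + k * ∫ x in a..b, e t x ≤ 0)
    {t : ℝ} (ht : 0 ≤ t) :
    ∫ x in a..b, e t x ≤ (∫ x in a..b, e 0 x) * Real.exp (-k * t) := by
  rw [← uIcc_of_le hab] at he he' hderiv
  have hdecay := le_mul_exp_of_hasDerivAt_add_mul_nonpos
    (continuousOn_intervalIntegral_of_continuousOn_prod he)
    (fun t ht => hasDerivAt_intervalIntegral_of_continuousOn_prod isOpen_Ioi
      (he.mono (prod_mono_left Ioi_subset_Ici_self))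
      (he'.mono (prod_mono_left Ioi_subset_Ici_self)) hderiv ht) hdiss ht
  rwa [sub_zero] at hdecay

theorem integral_mul_deriv_deriv_eq_neg_integral_deriv_sq {u u' u'' : ℝ → ℝ} {a b : ℝ}
    (hu : ∀ x ∈ [[a, b]], HasDerivWithinAt u (u' x) [[a, b]] x)
    (hu' : ∀ x ∈ [[a, b]], HasDerivWithinAt u' (u'' x) [[a, b]] x)
    (hu'' : IntervalIntegrable u'' volume a b) (ha : u' a = 0) (hb : u' b = 0) :
    ∫ x in a..b, u x * u'' x = -∫ x in a..b, u' x ^ 2 := by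
  have hu'_int : IntervalIntegrable u' volume a b :=
    ContinuousOn.intervalIntegrable fun x hx => (hu' x hx).continuousWithinAt
  rw [integral_mul_deriv_eq_deriv_mul_of_hasDerivWithinAt hu hu' hu'_int hu'', ha, hb]
  simp [sq]

theorem integral_add_mul_integral_nonpos_of_le_mul_deriv_deriv
    {e e' u u' u'' : ℝ → ℝ} {a b k c : ℝ} (hab : a ≤ b) (hc : 0 ≤ c)
    (he : IntervalIntegrable e volume a b) (he' : IntervalIntegrable e' volume a b)
    (hu : ∀ x ∈ Icc a b, HasDerivWithinAt u (u' x) (Icc a b) x)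
    (hu' : ∀ x ∈ Icc a b, HasDerivWithinAt u' (u'' x) (Icc a b) x)
    (hu'' : IntervalIntegrable u'' volume a b) (ha : u' a = 0) (hb : u' b = 0)
    (hle : ∀ x ∈ Icc a b, e' x + k * e x ≤ c * (u x * u'' x)) :
    (∫ x in a..b, e' x) + k * ∫ x in a..b, e x ≤ 0 := by
  rw [← uIcc_of_le hab] at hu hu' hle
  have hu_cont : ContinuousOn u [[a, b]] := fun x hx => (hu x hx).continuousWithinAt
  calc (∫ x in a..b, e' x) + k * ∫ x in a..b, e x = ∫ x in a..b, e' x + k * e x := by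
        rw [integral_add he' (he.const_mul k), intervalIntegral.integral_const_mul]
    _ ≤ ∫ x in a..b, c * (u x * u'' x) :=
        integral_mono_on hab (he'.add (he.const_mul k))
          ((hu''.continuousOn_mul hu_cont).const_mul c)
          fun x hx => hle x (by rwa [uIcc_of_le hab])
    _ = -(c * ∫ x in a..b, u' x ^ 2) := by
        rw [intervalIntegral.integral_const_mul,
          integral_mul_deriv_deriv_eq_neg_integral_deriv_sq hu hu' hu'' ha hb, mul_neg]
    _ ≤ 0 := neg_nonpos.2 (mul_nonneg hc (integral_nonneg hab fun x _ => sq_nonneg _))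

theorem dissipation_quadratic_nonpos {b beta k tau tautil a c d : ℝ} (hb : 0 ≤ b)
    (hkt : k * tautil ≤ 1) (hbeta : (b + 1) ^ 2 / 2 + b + k * tau / 2 < beta)
    (hda : |d| ≤ |a|) :
    2 * a * (-(beta * a) - c + b * d) + 2 * c * (-c + b * d)
      + k * (tau * a ^ 2 + tautil * c ^ 2) ≤ 0 := by
  have had : a * d ≤ a ^ 2 := by
    calc a * d ≤ |a| * |d| := by rw [← abs_mul]; exact le_abs_self _
      _ ≤ |a| * |a| := by gcongr
      _ = a ^ 2 := by rw [← sq, sq_abs]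
  have hbda : (b * d - a) ^ 2 ≤ ((b + 1) * a) ^ 2 := by
    rw [sq_le_sq, abs_mul, abs_of_nonneg (by linarith : 0 ≤ b + 1)]
    calc |b * d - a| ≤ |b * d| + |a| := abs_sub _ _
      _ ≤ (b + 1) * |a| := by rw [abs_mul, abs_of_nonneg hb]; nlinarith
  have hamgm : 2 * c * (b * d - a) ≤ c ^ 2 + (b * d - a) ^ 2 := by
    nlinarith [sq_nonneg (c - (b * d - a))]
  nlinarith [mul_le_mul_of_nonneg_left had hb, mul_le_mul_of_nonneg_right hkt (sq_nonneg c),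
    mul_le_mul_of_nonneg_left hbeta.le (sq_nonneg a)]

theorem energy_rate_add_mul_energy_le {lam b beta k tau tautil v w vt wt vss vbar vbar'' : ℝ}
    (hb : 0 ≤ b) (hkt : k * tautil ≤ 1) (hbeta : (b + 1) ^ 2 / 2 + b + k * tau / 2 < beta)
    (hv : tau * vt = lam ^ 2 * vss - v - w +
      (b * max v 0 + (1 - beta) * v + beta * vbar - lam ^ 2 * vbar''))
    (hw : tautil * wt = -w + b * max v 0) :
    2 * tau * (v - vbar) * vt + 2 * tautil * (w - b * max vbar 0) * wt +
        k * (tau * (v - vbar) ^ 2 + tautil * (w - b * max vbar 0) ^ 2) ≤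
      2 * lam ^ 2 * ((v - vbar) * (vss - vbar'')) := by
  have hcore := dissipation_quadratic_nonpos (a := v - vbar) (c := w - b * max vbar 0)
    (d := max v 0 - max vbar 0) hb hkt hbeta (abs_max_sub_max_le_abs v vbar 0)
  linear_combination hcore + 2 * (v - vbar) * hv + 2 * (w - b * max vbar 0) * hw

theorem HasDerivAt.mul_sq_sub_add_mul_sq_sub {x y : ℝ → ℝ} {x' y' p q c d t : ℝ}
    (hx : HasDerivAt x x' t) (hy : HasDerivAt y y' t) :
    HasDerivAt (fun t => p * (x t - c) ^ 2 + q * (y t - d) ^ 2)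
      (2 * p * (x t - c) * x' + 2 * q * (y t - d) * y') t :=
  ((((hx.sub_const c).pow 2).const_mul p).add (((hy.sub_const d).pow 2).const_mul q)).congr_deriv
    (by ring)

theorem lyapunov_functional_exponential_decay_general
    (L lam tau tautil b beta k : ℝ)
    (hL : 0 < L) (hb : 0 ≤ b) (hk : k = 1 / tautil)
    (hbeta : (b + 1) ^ 2 / 2 + b + k * tau / 2 < beta)
    (V W Vt Wt Vs Vss : ℝ → ℝ → ℝ)
    (Vbar Vbar' Vbar'' : ℝ → ℝ)
    -- the reference voltage is twice continuously differentiable with flat ends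
    (hVbar : ∀ s ∈ Icc 0 L, HasDerivWithinAt Vbar (Vbar' s) (Icc 0 L) s)
    (hVbar' : ∀ s ∈ Icc 0 L, HasDerivWithinAt Vbar' (Vbar'' s) (Icc 0 L) s)
    (hVbar''cont : ContinuousOn Vbar'' (Icc 0 L))
    (hVbar0 : Vbar' 0 = 0) (hVbarL : Vbar' L = 0)
    -- joint continuity of the solution and its partial derivatives
    (hVcont : ContinuousOn (fun p : ℝ × ℝ => V p.1 p.2) (Ici 0 ×ˢ Icc 0 L))
    (hWcont : ContinuousOn (fun p : ℝ × ℝ => W p.1 p.2) (Ici 0 ×ˢ Icc 0 L))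
    (hVtcont : ContinuousOn (fun p : ℝ × ℝ => Vt p.1 p.2) (Ici 0 ×ˢ Icc 0 L))
    (hWtcont : ContinuousOn (fun p : ℝ × ℝ => Wt p.1 p.2) (Ici 0 ×ˢ Icc 0 L))
    (hVsscont : ContinuousOn (fun p : ℝ × ℝ => Vss p.1 p.2) (Ici 0 ×ˢ Icc 0 L))
    -- partial derivatives
    (hVt : ∀ t ∈ Ici (0:ℝ), ∀ s ∈ Icc 0 L,
      HasDerivWithinAt (fun t' => V t' s) (Vt t s) (Ici 0) t)
    (hWt : ∀ t ∈ Ici (0:ℝ), ∀ s ∈ Icc 0 L,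
      HasDerivWithinAt (fun t' => W t' s) (Wt t s) (Ici 0) t)
    (hVs : ∀ t ∈ Ici (0:ℝ), ∀ s ∈ Icc 0 L,
      HasDerivWithinAt (fun s' => V t s') (Vs t s) (Icc 0 L) s)
    (hVss : ∀ t ∈ Ici (0:ℝ), ∀ s ∈ Icc 0 L,
      HasDerivWithinAt (fun s' => Vs t s') (Vss t s) (Icc 0 L) s)
    -- closed-loop cable dynamics with the reference tracking current control
    (hPDE_V : ∀ t ∈ Ici (0:ℝ), ∀ s ∈ Icc 0 L,
      tau * Vt t s = lam ^ 2 * Vss t s - V t s - W t s +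
        (b * max (V t s) 0 + (1 - beta) * V t s + beta * Vbar s
          - lam ^ 2 * Vbar'' s))
    (hPDE_W : ∀ t ∈ Ici (0:ℝ), ∀ s ∈ Icc 0 L,
      tautil * Wt t s = -W t s + b * max (V t s) 0)
    -- Neumann boundary conditions
    (hNeumann0 : ∀ t ∈ Ici (0:ℝ), Vs t 0 = 0)
    (hNeumannL : ∀ t ∈ Ici (0:ℝ), Vs t L = 0) :
    ∀ t ∈ Ici (0:ℝ),
      (1 / 2) * (∫ s in (0:ℝ)..L,
          (tau * (V t s - Vbar s) ^ 2 +
            tautil * (W t s - b * max (Vbar s) 0) ^ 2)) ≤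
        ((1 / 2) * ∫ s in (0:ℝ)..L,
          (tau * (V 0 s - Vbar s) ^ 2 +
            tautil * (W 0 s - b * max (Vbar s) 0) ^ 2)) * Real.exp (-k * t) := by
  have hkt : k * tautil ≤ 1 := by rw [hk, one_div_mul_eq_div]; exact div_self_le_one tautil
  have hVbar_cont : ContinuousOn (fun p : ℝ × ℝ => Vbar p.2) (Ici 0 ×ˢ Icc 0 L) :=
    ContinuousOn.comp (g := Vbar) (fun s hs => (hVbar s hs).continuousWithinAt)
      continuous_snd.continuousOn fun _ hp => hp.2
  have hVerr : ContinuousOn (fun p : ℝ × ℝ => V p.1 p.2 - Vbar p.2) (Ici 0 ×ˢ Icc 0 L) :=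
    hVcont.sub hVbar_cont
  have hWerr : ContinuousOn (fun p : ℝ × ℝ => W p.1 p.2 - b * max (Vbar p.2) 0)
      (Ici 0 ×ˢ Icc 0 L) :=
    hWcont.sub (continuousOn_const.mul (hVbar_cont.sup continuousOn_const))
  set e : ℝ → ℝ → ℝ := fun t s =>
    tau * (V t s - Vbar s) ^ 2 + tautil * (W t s - b * max (Vbar s) 0) ^ 2
  set e' : ℝ → ℝ → ℝ := fun t s =>
    2 * tau * (V t s - Vbar s) * Vt t s + 2 * tautil * (W t s - b * max (Vbar s) 0) * Wt t s
  have he : ContinuousOn e.uncurry (Ici 0 ×ˢ Icc 0 L) :=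
    (continuousOn_const.mul (hVerr.pow 2)).add (continuousOn_const.mul (hWerr.pow 2))
  have he' : ContinuousOn e'.uncurry (Ici 0 ×ˢ Icc 0 L) :=
    ((continuousOn_const.mul hVerr).mul hVtcont).add ((continuousOn_const.mul hWerr).mul hWtcont)
  have hderiv (t : ℝ) (ht : t ∈ Ioi 0) (s : ℝ) (hs : s ∈ Icc 0 L) :
      HasDerivAt (e · s) (e' t s) t :=
    ((hVt t (Ioi_subset_Ici_self ht) s hs).hasDerivAt (Ici_mem_nhds ht)).mul_sq_sub_add_mul_sq_sub
      ((hWt t (Ioi_subset_Ici_self ht) s hs).hasDerivAt (Ici_mem_nhds ht))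
  have hdiss (t : ℝ) (ht : t ∈ Ioi 0) :
      (∫ s in (0:ℝ)..L, e' t s) + k * ∫ s in (0:ℝ)..L, e t s ≤ 0 := by
    have ht' : t ∈ Ici (0:ℝ) := Ioi_subset_Ici_self ht
    refine integral_add_mul_integral_nonpos_of_le_mul_deriv_deriv hL.le
      (by positivity : (0:ℝ) ≤ 2 * lam ^ 2)
      ((he.uncurry_left t ht').intervalIntegrable_of_Icc hL.le)
      ((he'.uncurry_left t ht').intervalIntegrable_of_Icc hL.le)
      (u := fun s => V t s - Vbar s) (u' := fun s => Vs t s - Vbar' s)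
      (fun s hs => (hVs t ht' s hs).sub (hVbar s hs))
      (fun s hs => (hVss t ht' s hs).sub (hVbar' s hs))
      (((hVsscont.uncurry_left (f := Vss) t ht').sub hVbar''cont).intervalIntegrable_of_Icc hL.le)
      (by simp [hNeumann0 t ht', hVbar0]) (by simp [hNeumannL t ht', hVbarL])
      fun s hs => energy_rate_add_mul_energy_le hb hkt hbeta (hPDE_V t ht' s hs) (hPDE_W t ht' s hs)
  intro t ht
  have hdecay := intervalIntegral_le_mul_exp_of_dissipation hL.le he he' hderiv hdiss ht
  linarith

/-- Exponential-stability lemma in the Appendix supporting Proposition 1: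
for the closed-loop cable dynamics
`τ ∂V/∂t = λ² ∂²V/∂s² − V − W + I`, `τ̃ ∂W/∂t = −W + b g(V)` with
`I = b g(V) + (1−β) V + β V̄ − λ² V̄''` and Neumann boundary conditions, if
`b ≥ 0`, `τ, τ̃, λ > 0`, `k = 1/τ̃` and `β > (b+1)²/2 + b + kτ/2`, the Lyapunov
functional `𝓛₀(t) = ½ ∫₀ᴸ τ (V − V̄)² + τ̃ (W − b g(V̄))² ds` satisfies
`𝓛₀(t) ≤ 𝓛₀(0) exp(−k t)` for all `t ≥ 0`; in particular the equilibrium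
`(V̄, b g(V̄))` of the closed-loop neural dynamics is exponentially stable. -/
theorem lyapunov_functional_exponential_decay
    (L lam tau tautil b beta k : ℝ)
    (hL : 0 < L) (hlam : 0 < lam) (htau : 0 < tau) (htautil : 0 < tautil)
    (hb : 0 ≤ b) (hk : k = 1 / tautil)
    (hbeta : (b + 1) ^ 2 / 2 + b + k * tau / 2 < beta)
    (V W Vt Wt Vs Vss : ℝ → ℝ → ℝ)
    (Vbar Vbar' Vbar'' : ℝ → ℝ)
    -- the reference voltage is twice continuously differentiable with flat ends
    (hVbar : ∀ s ∈ Icc 0 L, HasDerivWithinAt Vbar (Vbar' s) (Icc 0 L) s)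
    (hVbar' : ∀ s ∈ Icc 0 L, HasDerivWithinAt Vbar' (Vbar'' s) (Icc 0 L) s)
    (hVbar''cont : ContinuousOn Vbar'' (Icc 0 L))
    (hVbar0 : Vbar' 0 = 0) (hVbarL : Vbar' L = 0)
    -- joint continuity of the solution and its partial derivatives
    (hVcont : ContinuousOn (fun p : ℝ × ℝ => V p.1 p.2) (Ici 0 ×ˢ Icc 0 L))
    (hWcont : ContinuousOn (fun p : ℝ × ℝ => W p.1 p.2) (Ici 0 ×ˢ Icc 0 L))
    (hVtcont : ContinuousOn (fun p : ℝ × ℝ => Vt p.1 p.2) (Ici 0 ×ˢ Icc 0 L))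
    (hWtcont : ContinuousOn (fun p : ℝ × ℝ => Wt p.1 p.2) (Ici 0 ×ˢ Icc 0 L))
    (hVscont : ContinuousOn (fun p : ℝ × ℝ => Vs p.1 p.2) (Ici 0 ×ˢ Icc 0 L))
    (hVsscont : ContinuousOn (fun p : ℝ × ℝ => Vss p.1 p.2) (Ici 0 ×ˢ Icc 0 L))
    -- partial derivatives
    (hVt : ∀ t ∈ Ici (0:ℝ), ∀ s ∈ Icc 0 L,
      HasDerivWithinAt (fun t' => V t' s) (Vt t s) (Ici 0) t)
    (hWt : ∀ t ∈ Ici (0:ℝ), ∀ s ∈ Icc 0 L,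
      HasDerivWithinAt (fun t' => W t' s) (Wt t s) (Ici 0) t)
    (hVs : ∀ t ∈ Ici (0:ℝ), ∀ s ∈ Icc 0 L,
      HasDerivWithinAt (fun s' => V t s') (Vs t s) (Icc 0 L) s)
    (hVss : ∀ t ∈ Ici (0:ℝ), ∀ s ∈ Icc 0 L,
      HasDerivWithinAt (fun s' => Vs t s') (Vss t s) (Icc 0 L) s)
    -- closed-loop cable dynamics with the reference tracking current control
    (hPDE_V : ∀ t ∈ Ici (0:ℝ), ∀ s ∈ Icc 0 L,
      tau * Vt t s = lam ^ 2 * Vss t s - V t s - W t s +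
        (b * max (V t s) 0 + (1 - beta) * V t s + beta * Vbar s
          - lam ^ 2 * Vbar'' s))
    (hPDE_W : ∀ t ∈ Ici (0:ℝ), ∀ s ∈ Icc 0 L,
      tautil * Wt t s = -W t s + b * max (V t s) 0)
    -- Neumann boundary conditions
    (hNeumann0 : ∀ t ∈ Ici (0:ℝ), Vs t 0 = 0)
    (hNeumannL : ∀ t ∈ Ici (0:ℝ), Vs t L = 0) :
    ∀ t ∈ Ici (0:ℝ),
      (1 / 2) * (∫ s in (0:ℝ)..L,
          (tau * (V t s - Vbar s) ^ 2 +
            tautil * (W t s - b * max (Vbar s) 0) ^ 2)) ≤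
        ((1 / 2) * ∫ s in (0:ℝ)..L,
          (tau * (V 0 s - Vbar s) ^ 2 +
            tautil * (W 0 s - b * max (Vbar s) 0) ^ 2)) * Real.exp (-k * t) :=
  lyapunov_functional_exponential_decay_general L lam tau tautil b beta k hL hb hk hbeta V W Vt Wt
    Vs Vss Vbar Vbar' Vbar'' hVbar hVbar' hVbar''cont hVbar0 hVbarL hVcont hWcont hVtcont hWtcont
    hVsscont hVt hWt hVs hVss hPDE_V hPDE_W hNeumann0 hNeumannL
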